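/- Let m > 4 be an integer, let u : ℝ^m ∖ {0} → ℝ^{m²} be the Misawa–Nakauchi map, let α ∈ (0, π/2) satisfy sin²α = 1 − 2/m, and define ũ(x) = (sin α · u(x), cos α) with values in 𝕊^{m²} ⊂ ℝ^{m²+1}. Then the energy density of ũ satisfies |∇ũ(x)|²/2 = (m−2)/r(x)² for every x ∈ ℝ^m ∖ {0}. -/

import Mathlib

noncomputable section

open Real

/-- Partial derivative of `f` in the `k`-th coordinate direction. -/
def pd {m : ℕ} (k : Fin m) (f : EuclideanSpace ℝ (Fin m) → ℝ)
    (x : EuclideanSpace ℝ (Fin m)) : ℝ :=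
  fderiv ℝ f x (EuclideanSpace.single k 1)

/-- Euclidean Laplacian `Δf = Σ_k ∂²f/∂x_k²`. -/
def lap {m : ℕ} (f : EuclideanSpace ℝ (Fin m) → ℝ)
    (x : EuclideanSpace ℝ (Fin m)) : ℝ :=
  ∑ k : Fin m, pd k (pd k f) x

/-- Squared norm of the total derivative of a map `w` with components `w a`:
`|∇w|² = Σ_{k,a} (∂_k w_a)²`. -/
def gradSq {m : ℕ} {ι : Type*} [Fintype ι]
    (w : ι → EuclideanSpace ℝ (Fin m) → ℝ) (x : EuclideanSpace ℝ (Fin m)) : ℝ :=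
  ∑ k : Fin m, ∑ a : ι, (pd k (w a) x) ^ 2

/-- `w` satisfies the (extrinsic) biharmonic map equation for sphere-valued maps at `x`:
`Δ²w + 2 div(|∇w|²∇w) + (|Δw|² + Δ|∇w|² + 2⟨∇w,∇Δw⟩ + 2|∇w|⁴) w = 0`. -/
def IsBiharmonicAt {m : ℕ} {ι : Type*} [Fintype ι]
    (w : ι → EuclideanSpace ℝ (Fin m) → ℝ) (x : EuclideanSpace ℝ (Fin m)) : Prop :=
  ∀ a : ι,
    lap (lap (w a)) x
      + 2 * ∑ k : Fin m, pd k (fun y => gradSq w y * pd k (w a) y) x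
      + ((∑ b : ι, (lap (w b) x) ^ 2) + lap (gradSq w) x
          + 2 * ∑ k : Fin m, ∑ b : ι, pd k (w b) x * pd k (lap (w b)) x
          + 2 * (gradSq w x) ^ 2) * w a x = 0

/-- The Misawa–Nakauchi map `u_{ij}(x) = (1/√(m(m−1)))(−δ_{ij} + m xᵢxⱼ/r²)`. -/
def uMN (m : ℕ) (i j : Fin m) (x : EuclideanSpace ℝ (Fin m)) : ℝ :=
  (1 / Real.sqrt ((m : ℝ) * ((m : ℝ) - 1))) *
    (-(if i = j then (1 : ℝ) else 0) + (m : ℝ) * x i * x j / ‖x‖ ^ 2)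

/-- The rotated map `ũ_α = (sin α · u, cos α)`, with values in `ℝ^{m²+1} = ℝ^{m²} × ℝ`. -/
def uTilde (m : ℕ) (α : ℝ) :
    (Fin m × Fin m) ⊕ Unit → EuclideanSpace ℝ (Fin m) → ℝ
  | Sum.inl p => fun x => Real.sin α * uMN m p.1 p.2 x
  | Sum.inr _ => fun _ => Real.cos α

/-!
With r² = ‖x‖², one has r⁴ ∂ₖ(xᵢxⱼ/r²) = r²(δᵢₖxⱼ + δⱼₖxᵢ) − 2xᵢxⱼxₖ, and summing the squares
over i, j, k gives 2(m − 1)r⁶. Since u = (−δ + m xᵢxⱼ/r²)/√(m(m−1)), this yields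
|∇u|² = 2m/r². The constant last component of ũ contributes nothing, so
|∇ũ|² = sin²α · 2m/r² = 2(m − 2)/r².
-/

open Finset

lemma sum_sq_outer_deriv_numerator {ι : Type*} [Fintype ι] [DecidableEq ι] (v : ι → ℝ) :
    ∑ k, ∑ i, ∑ j, ((∑ l, v l ^ 2) * ((if i = k then 1 else 0) * v j
      + (if j = k then 1 else 0) * v i) - 2 * v i * v j * v k) ^ 2
      = 2 * (Fintype.card ι - 1) * (∑ l, v l ^ 2) ^ 3 := by
  set Q := ∑ l, v l ^ 2 with hQ
  have expand : ∀ k i j : ι, (Q * ((if i = k then 1 else 0) * v j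
      + (if j = k then 1 else 0) * v i) - 2 * v i * v j * v k) ^ 2 =
      Q ^ 2 * ((if i = k then 1 else 0) * v j ^ 2) + Q ^ 2 * ((if j = k then 1 else 0) * v i ^ 2)
        + 4 * (v k ^ 2 * (v i ^ 2 * v j ^ 2))
        + 2 * Q ^ 2 * ((if i = k then 1 else 0) * ((if j = k then 1 else 0) * (v i * v j)))
        - 4 * Q * ((if i = k then 1 else 0) * (v i * v k * v j ^ 2))
        - 4 * Q * ((if j = k then 1 else 0) * (v i ^ 2 * (v j * v k))) := by
    intro k i j
    split_ifs <;> ring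
  simp only [expand]
  simp only [sum_add_distrib, sum_sub_distrib, ← mul_sum, ← sum_mul, ← hQ]
  simp only [ite_mul, one_mul, zero_mul, sum_ite_eq', mem_univ, if_true, ← mul_sum, ← sum_mul,
    ← hQ, sum_const, card_univ, ← sq, nsmul_eq_mul]
  ring

section PartialDerivatives

variable {m : ℕ} (k : Fin m) {f g : EuclideanSpace ℝ (Fin m) → ℝ}
  {x : EuclideanSpace ℝ (Fin m)}

lemma pd_const_mul (c : ℝ) : pd k (fun y => c * f y) x = c * pd k f x := by
  simp only [pd, ← smul_eq_mul (a := c)]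
  rw [show (fun y => c • f y) = c • f from rfl, fderiv_const_smul_field]
  rfl

lemma pd_const_add (c : ℝ) : pd k (fun y => c + f y) x = pd k f x := by
  simp only [pd, fderiv_const_add]

lemma pd_const (c : ℝ) : pd k (fun _ => c) x = 0 := by
  simp [pd]

lemma pd_mul (hf : DifferentiableAt ℝ f x) (hg : DifferentiableAt ℝ g x) :
    pd k (fun y => f y * g y) x = pd k f x * g x + f x * pd k g x := by
  simp only [pd, fderiv_fun_mul hf hg]
  simp only [add_apply, smul_apply, smul_eq_mul]
  ring

lemma pd_inv (hf : DifferentiableAt ℝ f x) (hfx : f x ≠ 0) :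
    pd k (fun y => (f y)⁻¹) x = -pd k f x / f x ^ 2 := by
  have h : HasFDerivAt (fun y => (f y)⁻¹) _ x := (hasFDerivAt_inv hfx).comp x hf.hasFDerivAt
  simp only [pd, h.fderiv]
  simp
  ring

lemma pd_apply (i : Fin m) : pd k (fun y => y i) x = if i = k then 1 else 0 := by
  simp only [pd, (PiLp.hasFDerivAt_apply (𝕜 := ℝ) 2 x i).fderiv]
  simp [PiLp.single_apply]

lemma pd_norm_sq : pd k (fun y => ‖y‖ ^ 2) x = 2 * x k := by
  simp only [pd, (hasStrictFDerivAt_norm_sq x).hasFDerivAt.fderiv]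
  simp [EuclideanSpace.inner_single_right]

end PartialDerivatives

variable {m : ℕ} {x : EuclideanSpace ℝ (Fin m)}

lemma pd_apply_mul_apply_div_norm_sq (k i j : Fin m) (hx : x ≠ 0) :
    pd k (fun y => y i * y j / ‖y‖ ^ 2) x =
      (‖x‖ ^ 2 * ((if i = k then 1 else 0) * x j + (if j = k then 1 else 0) * x i)
        - 2 * x i * x j * x k) / (‖x‖ ^ 2) ^ 2 := by
  have hQ : ‖x‖ ^ 2 ≠ 0 := by positivity
  have hN : DifferentiableAt ℝ (fun y => ‖y‖ ^ 2) x :=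
    (hasStrictFDerivAt_norm_sq x).hasFDerivAt.differentiableAt
  simp only [div_eq_mul_inv]
  rw [pd_mul (g := fun y => (‖y‖ ^ 2)⁻¹) _ (by fun_prop) (hN.inv hQ),
    pd_mul _ (by fun_prop) (by fun_prop), pd_apply, pd_apply, pd_inv _ hN hQ, pd_norm_sq]
  field_simp
  ring

lemma sum_sq_pd_apply_mul_apply_div_norm_sq (hx : x ≠ 0) :
    ∑ k, ∑ i, ∑ j, (pd k (fun y => y i * y j / ‖y‖ ^ 2) x) ^ 2
      = 2 * (m - 1) / ‖x‖ ^ 2 := by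
  simp only [pd_apply_mul_apply_div_norm_sq _ _ _ hx, div_pow, ← sum_div]
  rw [EuclideanSpace.real_norm_sq_eq, sum_sq_outer_deriv_numerator, Fintype.card_fin,
    ← EuclideanSpace.real_norm_sq_eq]
  field_simp

lemma gradSq_uMN (hm : 2 ≤ m) (hx : x ≠ 0) :
    gradSq (fun p : Fin m × Fin m => uMN m p.1 p.2) x = 2 * m / ‖x‖ ^ 2 := by
  have hm' : (2 : ℝ) ≤ m := by exact_mod_cast hm
  have huMN : ∀ i j : Fin m, uMN m i j = fun y => (1 / √(m * (m - 1))) *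
      (-(if i = j then 1 else 0) + m * (y i * y j / ‖y‖ ^ 2)) := by
    intro i j
    funext y
    simp only [uMN, mul_assoc, mul_div_assoc]
  simp only [gradSq, Fintype.sum_prod_type, huMN, pd_const_mul, pd_const_add, mul_pow,
    ← mul_sum, sum_sq_pd_apply_mul_apply_div_norm_sq hx, div_pow,
    Real.sq_sqrt (by nlinarith : (0 : ℝ) ≤ m * (m - 1))]
  have hm1 : (m : ℝ) - 1 ≠ 0 := by linarith
  field_simp

lemma gradSq_uTilde (α : ℝ) :
    gradSq (uTilde m α) x = sin α ^ 2 * gradSq (fun p : Fin m × Fin m => uMN m p.1 p.2) x := by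
  simp only [gradSq, Fintype.sum_sum_type, uTilde, pd_const_mul, pd_const, mul_sum]
  simp [mul_pow]

theorem stmt5_general (m : ℕ) (hm : 4 < m) (α : ℝ)
    (hsin : Real.sin α ^ 2 = 1 - 2 / (m : ℝ))
    (x : EuclideanSpace ℝ (Fin m)) (hx : x ≠ 0) :
    gradSq (uTilde m α) x / 2 = ((m : ℝ) - 2) / ‖x‖ ^ 2 := by
  have hm0 : (m : ℝ) ≠ 0 := by positivity
  rw [gradSq_uTilde, gradSq_uMN (by omega) hx, hsin]
  field_simp

theorem stmt5 (m : ℕ) (hm : 4 < m) (α : ℝ) (hα : α ∈ Set.Ioo 0 (π / 2))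
    (hsin : Real.sin α ^ 2 = 1 - 2 / (m : ℝ))
    (x : EuclideanSpace ℝ (Fin m)) (hx : x ≠ 0) :
    gradSq (uTilde m α) x / 2 = ((m : ℝ) - 2) / ‖x‖ ^ 2 :=
  stmt5_general m hm α hsin x hx
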